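/- arXiv:1606.08077 — 3 statements merged into one kernel-verified Lean document; each statement's English description precedes it below -/
import Mathlib

section
/- Fix a preference ≽^sing on the single items in S with x_1 ≽^sing x_2 ≽^sing ⋯ ≽^sing x_m, and for each k ∈ {1,…,m} let I_k = {x_1,…,x_k}. If a subset T ⊆ S is possibly agreeable with respect to ≽^sing, then |I_k ∩ T| > k/2 for some k ∈ {1,…,m}. -/
open Finset

/-- A preference on subsets: a complete (total, hence reflexive) and transitive relation. -/
def IsPref {m : ℕ} (R : Finset (Fin m) → Finset (Fin m) → Prop) : Prop :=
  (∀ A B, R A B ∨ R B A) ∧ ∀ A B C, R A B → R B C → R A C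

/-- A preference on single items: a complete and transitive relation. -/
def IsSingPref {m : ℕ} (Rs : Fin m → Fin m → Prop) : Prop :=
  (∀ x y, Rs x y ∨ Rs y x) ∧ ∀ x y z, Rs x y → Rs y z → Rs x z

/-- A preference is monotonic if `T ∪ {x} ≽ T` for every subset `T` and item `x`. -/
def MonotonicPref {m : ℕ} (R : Finset (Fin m) → Finset (Fin m) → Prop) : Prop :=
  ∀ (T : Finset (Fin m)) (x : Fin m), R (insert x T) T

/-- A preference on subsets is responsive w.r.t. a preference `Rs` on single items if it is
monotonic and `(T \ {y}) ∪ {x} ≽ T` whenever `x ∉ T`, `y ∈ T` and `x ≽ˢ y`. -/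
def Responsive {m : ℕ} (Rs : Fin m → Fin m → Prop)
    (R : Finset (Fin m) → Finset (Fin m) → Prop) : Prop :=
  MonotonicPref R ∧
    ∀ (T : Finset (Fin m)) (x y : Fin m),
      x ∉ T → y ∈ T → Rs x y → R (insert x (T.erase y)) T

/-- A preference on subsets is consistent with a preference on single items if its
restriction to singletons agrees with it. -/
def Consistent {m : ℕ} (Rs : Fin m → Fin m → Prop)
    (R : Finset (Fin m) → Finset (Fin m) → Prop) : Prop :=
  ∀ x y : Fin m, R {x} {y} ↔ Rs x y

/-- `T` is necessarily agreeable w.r.t. `Rs` if `T ≽ Tᶜ` for every responsive preference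
consistent with `Rs`. -/
def NecAgreeable {m : ℕ} (Rs : Fin m → Fin m → Prop) (T : Finset (Fin m)) : Prop :=
  ∀ R : Finset (Fin m) → Finset (Fin m) → Prop,
    IsPref R → Responsive Rs R → Consistent Rs R → R T Tᶜ

/-- `T` is possibly agreeable w.r.t. `Rs` if `T ≻ Tᶜ` for some responsive preference
consistent with `Rs`. -/
def PossAgreeable {m : ℕ} (Rs : Fin m → Fin m → Prop) (T : Finset (Fin m)) : Prop :=
  ∃ R : Finset (Fin m) → Finset (Fin m) → Prop,
    IsPref R ∧ Responsive Rs R ∧ Consistent Rs R ∧ R T Tᶜ ∧ ¬ R Tᶜ T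

/-!
If no prefix `I_k` has more than half of its items in `T`, then every prefix holds at least as
many items of `Tᶜ` as of `T`. Starting from `A = T`, trade the best item of `A \ Tᶜ` for a better
item of `Tᶜ \ A` (responsiveness); such an item exists by the prefix condition, which the trade
preserves. Once `A ⊆ Tᶜ`, add the remaining items (monotonicity). Every step weakly improves,
so `Tᶜ ≽ T` for every responsive preference, and `T ≻ Tᶜ` is impossible.
-/

section PrefixDominated

variable {α : Type*} [LinearOrder α]

def PrefixDominated (A B : Finset α) : Prop :=
  ∀ i : α, #{x ∈ A | x ≤ i} ≤ #{x ∈ B | x ≤ i}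

theorem PrefixDominated.exists_lt_of_mem_sdiff {A B : Finset α} (hAB : PrefixDominated A B)
    {y : α} (hyA : y ∈ A) (hyB : y ∉ B) : ∃ x ∈ B, x ∉ A ∧ x < y := by
  by_contra! hx
  have hssub : {x ∈ B | x ≤ y} ⊂ {x ∈ A | x ≤ y} := by
    refine ssubset_iff_of_subset (fun b hb => ?_) |>.2 ⟨y, by simp [hyA], by simp [hyB]⟩
    rw [mem_filter] at hb ⊢
    refine ⟨?_, hb.2⟩
    by_contra hbA
    exact hyB (le_antisymm hb.2 (hx b hb.1 hbA) ▸ hb.1)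
  exact (card_lt_card hssub).not_ge (hAB y)

theorem PrefixDominated.insert_erase {A B : Finset α} (hAB : PrefixDominated A B) {x y : α}
    (hyA : y ∈ A) (hy_min : ∀ z ∈ A, z ∉ B → y ≤ z) (hxB : x ∈ B) (hxy : x < y) :
    PrefixDominated (insert x (A.erase y)) B := by
  intro i
  rcases lt_or_ge i y with hiy | hyi
  · refine card_le_card fun z hz => ?_
    simp only [mem_filter, mem_insert, mem_erase] at hz ⊢
    refine ⟨?_, hz.2⟩
    rcases hz with ⟨rfl | ⟨-, hzA⟩, hzi⟩
    · exact hxB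
    · by_contra hzB
      exact (hzi.trans_lt hiy).not_ge (hy_min z hzA hzB)
  · calc #{z ∈ insert x (A.erase y) | z ≤ i}
        ≤ #({z ∈ A | z ≤ i}.erase y) + 1 := by
          rw [filter_insert, if_pos (hxy.le.trans hyi), filter_erase]
          exact card_insert_le _ _
      _ = #{z ∈ A | z ≤ i} := card_erase_add_one (by simp [hyA, hyi])
      _ ≤ #{z ∈ B | z ≤ i} := hAB i

theorem card_filter_le_add_card_compl_filter_le [Fintype α] [DecidableEq α]
    [LocallyFiniteOrderBot α] (T : Finset α) (i : α) :
    #{x ∈ T | x ≤ i} + #{x ∈ Tᶜ | x ≤ i} = #(Iic i) := by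
  rw [← card_filter_add_card_filter_not (s := Iic i) (· ∈ T)]
  congr 2 <;> ext x <;> simp [and_comm]

end PrefixDominated

section Responsive

variable {m : ℕ} {R : Finset (Fin m) → Finset (Fin m) → Prop}

theorem IsPref.refl (hR : IsPref R) (A : Finset (Fin m)) : R A A :=
  (hR.1 A A).elim id id

theorem MonotonicPref.rel_of_subset (hmono : MonotonicPref R) (hR : IsPref R)
    {A B : Finset (Fin m)} (h : A ⊆ B) : R B A := by
  suffices ∀ s : Finset (Fin m), R (A ∪ s) A by
    simpa [union_sdiff_of_subset h] using this (B \ A)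
  intro s
  induction s using Finset.induction_on with
  | empty => simpa using hR.refl A
  | insert x s _ ih => rw [union_insert]; exact hR.2 _ _ _ (hmono _ x) ih

theorem PrefixDominated.rel_of_responsive {Rs : Fin m → Fin m → Prop} (hR : IsPref R)
    (hResp : Responsive Rs R) (hord : ∀ i j : Fin m, i ≤ j → Rs i j)
    {A B : Finset (Fin m)} (hAB : PrefixDominated A B) : R B A := by
  induction hn : #(A \ B) using Nat.strong_induction_on generalizing A with
  | _ n ih =>
  by_cases hsub : A ⊆ B
  · exact hResp.1.rel_of_subset hR hsub
  have hne : (A \ B).Nonempty := by rwa [sdiff_nonempty]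
  set y := (A \ B).min' hne
  obtain ⟨hyA, hyB⟩ := mem_sdiff.1 ((A \ B).min'_mem hne)
  have hy_min : ∀ z ∈ A, z ∉ B → y ≤ z := fun z hzA hzB => min'_le _ _ (mem_sdiff.2 ⟨hzA, hzB⟩)
  obtain ⟨x, hxB, hxA, hxy⟩ := hAB.exists_lt_of_mem_sdiff hyA hyB
  have hcard : #(insert x (A.erase y) \ B) < n := by
    rw [insert_sdiff_of_mem _ hxB, erase_sdiff_comm, ← hn]
    exact card_erase_lt_of_mem (mem_sdiff.2 ⟨hyA, hyB⟩)
  exact hR.2 _ _ _ (ih _ hcard (hAB.insert_erase hyA hy_min hxB hxy) rfl)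
    (hResp.2 A x y hxA hyA (hord x y hxy.le))

end Responsive

theorem stmt_4_general {m : ℕ} (Rs : Fin m → Fin m → Prop)
    (hord : ∀ i j : Fin m, i ≤ j → Rs i j)
    (T : Finset (Fin m)) (hT : PossAgreeable Rs T) :
    ∃ k : ℕ, 1 ≤ k ∧ k ≤ m ∧ k < 2 * (T.filter (fun x => x.val < k)).card := by
  obtain ⟨R, hR, hResp, -, -, hTc⟩ := hT
  by_contra! h
  refine hTc (PrefixDominated.rel_of_responsive hR hResp hord fun i => ?_)
  have hi := h (i + 1) (Nat.succ_pos _) i.isLt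
  have hprefix : {x ∈ T | x.val < i.val + 1} = {x ∈ T | x ≤ i} :=
    filter_congr fun x _ => by rw [Nat.lt_add_one_iff, Fin.le_iff_val_le_val]
  have hsplit := card_filter_le_add_card_compl_filter_le T i
  rw [Fin.card_Iic] at hsplit
  rw [hprefix] at hi
  omega

/-- If `x_1 ≽ˢ x_2 ≽ˢ ⋯ ≽ˢ x_m` and `T` is possibly agreeable w.r.t. `Rs`, then
`|I_k ∩ T| > k/2` for some `k ∈ {1,…,m}`. -/
theorem stmt_4 {m : ℕ} (Rs : Fin m → Fin m → Prop) (hRs : IsSingPref Rs)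
    (hord : ∀ i j : Fin m, i ≤ j → Rs i j)
    (T : Finset (Fin m)) (hT : PossAgreeable Rs T) :
    ∃ k : ℕ, 1 ≤ k ∧ k ≤ m ∧ k < 2 * (T.filter (fun x => x.val < k)).card :=
  stmt_4_general Rs hord T hT
end

section
/- Fix a strict preference ≽^sing on the single items in S with x_1 ≻^sing x_2 ≻^sing ⋯ ≻^sing x_m, and for each k ∈ {1,…,m} let I_k = {x_1,…,x_k}. If a subset T ⊆ S satisfies |I_k ∩ T| > k/2 for some k ∈ {1,…,m}, then T is possibly agreeable with respect to ≽^sing. -/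
open Finset

/-!
Rank subsets by an additive utility `∑ i ∈ A, w i` with item weights strictly decreasing along
the order `x_1 ≻ x_2 ≻ ⋯`: such a preference is responsive and consistent. Give each of the first
`k` items a weight `B` exceeding the total of the strictly decreasing tie-breakers `m - i`. Since
`T` holds a strict majority of `I_k`, it carries at least one more `B` than `Tᶜ`, which outweighs
every tie-breaker `Tᶜ` may collect, so `T ≻ Tᶜ`.
-/

section AdditivePref

variable {m : ℕ}

def additivePref (w : Fin m → ℕ) (A B : Finset (Fin m)) : Prop :=
  ∑ i ∈ B, w i ≤ ∑ i ∈ A, w i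

theorem isPref_additivePref (w : Fin m → ℕ) : IsPref (additivePref w) :=
  ⟨fun _ _ => le_total _ _, fun _ _ _ hAB hBC => hBC.trans hAB⟩

theorem responsive_additivePref {Rs : Fin m → Fin m → Prop} {w : Fin m → ℕ}
    (hw : ∀ x y, Rs x y → w y ≤ w x) : Responsive Rs (additivePref w) := by
  refine ⟨fun T x => sum_le_sum_of_subset (subset_insert x T), fun T x y hx hy hxy => ?_⟩
  have hxT : x ∉ T.erase y := fun h => hx (mem_of_mem_erase h)
  rw [additivePref, sum_insert hxT, ← add_sum_erase T w hy]
  exact Nat.add_le_add_right (hw x y hxy) _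

theorem consistent_additivePref {Rs : Fin m → Fin m → Prop} {w : Fin m → ℕ}
    (hw : ∀ x y, Rs x y ↔ w y ≤ w x) : Consistent Rs (additivePref w) := fun x y => by
  simp [additivePref, hw]

theorem possAgreeable_of_sum_compl_lt {Rs : Fin m → Fin m → Prop} {w : Fin m → ℕ}
    {T : Finset (Fin m)} (hw : ∀ x y, Rs x y ↔ w y ≤ w x)
    (hT : ∑ i ∈ Tᶜ, w i < ∑ i ∈ T, w i) : PossAgreeable Rs T :=
  ⟨additivePref w, isPref_additivePref w, responsive_additivePref fun x y => (hw x y).1,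
    consistent_additivePref hw, hT.le, hT.not_ge⟩

end AdditivePref

theorem sum_compl_lt_sum_of_card_lt_two_mul_card_filter {α : Type*} [Fintype α] [DecidableEq α]
    (p : α → Prop) [DecidablePred p] (g : α → ℕ) {T : Finset α}
    (hT : #{i | p i} < 2 * #(T.filter p)) :
    ∑ i ∈ Tᶜ, ((if p i then ∑ j, g j + 1 else 0) + g i) <
      ∑ i ∈ T, ((if p i then ∑ j, g j + 1 else 0) + g i) := by
  set B := ∑ j, g j + 1
  have hcard : #(T.filter p) + #(Tᶜ.filter p) = #{i | p i} := by
    rw [← card_union_of_disjoint (disjoint_filter_filter disjoint_compl_right), ← filter_union,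
      union_compl]
  have hmajority : #(Tᶜ.filter p) + 1 ≤ #(T.filter p) := by omega
  have htie : ∑ i ∈ Tᶜ, g i < B :=
    Nat.lt_succ_of_le (sum_le_univ_sum_of_nonneg fun _ => Nat.zero_le _)
  simp only [sum_add_distrib, sum_ite, sum_const, smul_eq_mul]
  calc #(Tᶜ.filter p) * B + ∑ i ∈ Tᶜ, g i < (#(Tᶜ.filter p) + 1) * B := by
        rw [add_one_mul]; omega
    _ ≤ #(T.filter p) * B := Nat.mul_le_mul_right B hmajority
    _ ≤ #(T.filter p) * B + ∑ i ∈ T, g i := Nat.le_add_right _ _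

theorem stmt_5_general {m : ℕ} (Rs : Fin m → Fin m → Prop)
    (hord : ∀ i j : Fin m, i ≤ j → Rs i j)
    (hstrict : ∀ i j : Fin m, i < j → ¬ Rs j i)
    (T : Finset (Fin m))
    (h : ∃ k : ℕ, 1 ≤ k ∧ k ≤ m ∧ k < 2 * (T.filter (fun x => x.val < k)).card) :
    PossAgreeable Rs T := by
  obtain ⟨k, -, hkm, hkT⟩ := h
  have hfirst : Antitone fun i : Fin m => if i.val < k then ∑ j : Fin m, (m - j.val) + 1 else 0 :=
    fun i j hij => by rw [Fin.le_def] at hij; dsimp only; split_ifs <;> omega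
  have htie : StrictAnti fun i : Fin m => m - i.val := fun i j hij => by
    have := j.isLt; rw [Fin.lt_def] at hij; dsimp only; omega
  have hw := hfirst.add_strictAnti htie
  have hkI : #{i : Fin m | i.val < k} < 2 * #(T.filter fun i => i.val < k) := by
    rwa [Fin.card_filter_val_lt, min_eq_right hkm]
  refine possAgreeable_of_sum_compl_lt (fun x y => ?_)
    (sum_compl_lt_sum_of_card_lt_two_mul_card_filter _ (fun i : Fin m => m - i.val) hkI)
  rw [hw.le_iff_ge]
  exact ⟨fun hxy => not_lt.1 fun hyx => hstrict y x hyx hxy, hord x y⟩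

/-- If `x_1 ≻ˢ x_2 ≻ˢ ⋯ ≻ˢ x_m` (a strict ordering) and `|I_k ∩ T| > k/2` for some
`k ∈ {1,…,m}`, then `T` is possibly agreeable w.r.t. `Rs`. -/
theorem stmt_5 {m : ℕ} (Rs : Fin m → Fin m → Prop) (hRs : IsSingPref Rs)
    (hord : ∀ i j : Fin m, i ≤ j → Rs i j)
    (hstrict : ∀ i j : Fin m, i < j → ¬ Rs j i)
    (T : Finset (Fin m))
    (h : ∃ k : ℕ, 1 ≤ k ∧ k ≤ m ∧ k < 2 * (T.filter (fun x => x.val < k)).card) :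
    PossAgreeable Rs T :=
  stmt_5_general Rs hord hstrict T h
end

section
/- Let S = {x_1,…,x_6} and consider the strict preferences on single items ≽^sing_1: x_1 ≻ x_4 ≻ x_5 ≻ x_6 ≻ x_2 ≻ x_3, ≽^sing_2: x_2 ≻ x_5 ≻ x_6 ≻ x_4 ≻ x_3 ≻ x_1, and ≽^sing_3: x_3 ≻ x_6 ≻ x_4 ≻ x_5 ≻ x_1 ≻ x_2. Then every subset T ⊆ S that is necessarily agreeable with respect to all three of ≽^sing_1, ≽^sing_2, ≽^sing_3 satisfies |T| ≥ 5; in particular, no such subset of size at most ⌈6/2⌉ + 1 = 4 exists. -/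
open Finset

/-- Ranks encoding `x_1 ≻ x_4 ≻ x_5 ≻ x_6 ≻ x_2 ≻ x_3` (item `x_i` is `(i-1 : Fin 6)`). -/
def rank1 : Fin 6 → ℕ := ![0, 4, 5, 1, 2, 3]

/-- Ranks encoding `x_2 ≻ x_5 ≻ x_6 ≻ x_4 ≻ x_3 ≻ x_1`. -/
def rank2 : Fin 6 → ℕ := ![5, 0, 4, 3, 1, 2]

/-- Ranks encoding `x_3 ≻ x_6 ≻ x_4 ≻ x_5 ≻ x_1 ≻ x_2`. -/
def rank3 : Fin 6 → ℕ := ![4, 5, 0, 2, 3, 1]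

/-!
An additive utility `u` that represents a ranking induces a responsive preference consistent
with it, so a necessarily agreeable `T` has `∑ u` over `Tᶜ` at most `∑ u` over `T`. Giving the
`k` best items a dominant weight turns this into: `T` contains at least as many of the `k` best
items of each ranking as `Tᶜ` does. For `k = 1` this puts `x_1, x_2, x_3` into `T`; for `k = 3`
it forces two of each of `{x_1, x_4, x_5}`, `{x_2, x_5, x_6}`, `{x_3, x_6, x_4}` into `T`, hence
two of `x_4, x_5, x_6`.
-/

section Additive

variable {m : ℕ}

def sumPref (u : Fin m → ℕ) (A B : Finset (Fin m)) : Prop :=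
  ∑ a ∈ B, u a ≤ ∑ a ∈ A, u a

lemma isPref_sumPref (u : Fin m → ℕ) : IsPref (sumPref u) :=
  ⟨fun _ _ => le_total _ _, fun _ _ _ hAB hBC => hBC.trans hAB⟩

lemma responsive_sumPref {Rs : Fin m → Fin m → Prop} {u : Fin m → ℕ}
    (hu : ∀ x y, Rs x y → u y ≤ u x) : Responsive Rs (sumPref u) := by
  refine ⟨fun T x => sum_le_sum_of_subset (subset_insert x T), fun T x y hx hy hxy => ?_⟩
  have hx' : x ∉ T.erase y := fun h => hx (mem_of_mem_erase h)
  rw [sumPref, sum_insert hx', ← add_sum_erase T u hy]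
  exact Nat.add_le_add_right (hu x y hxy) _

lemma consistent_sumPref {Rs : Fin m → Fin m → Prop} {u : Fin m → ℕ}
    (hu : ∀ x y, Rs x y ↔ u y ≤ u x) : Consistent Rs (sumPref u) := by
  intro x y
  simp only [sumPref, sum_singleton, hu]

lemma NecAgreeable.sum_compl_le {Rs : Fin m → Fin m → Prop} {T : Finset (Fin m)}
    (hT : NecAgreeable Rs T) {u : Fin m → ℕ} (hu : ∀ x y, Rs x y ↔ u y ≤ u x) :
    ∑ a ∈ Tᶜ, u a ≤ ∑ a ∈ T, u a :=
  hT _ (isPref_sumPref u) (responsive_sumPref fun x y => (hu x y).1) (consistent_sumPref hu)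

lemma NecAgreeable.card_filter_compl_le {rank : Fin m → ℕ} {N : ℕ} (hrank : ∀ a, rank a < N)
    {T : Finset (Fin m)} (hT : NecAgreeable (fun x y => rank x ≤ rank y) T) (k : ℕ) :
    #{a ∈ Tᶜ | rank a < k} ≤ #{a ∈ T | rank a < k} := by
  set C := m * N + 1
  -- The weight `C` exceeds every possible total of the tie-breaker `N - rank a`.
  set u : Fin m → ℕ := fun a => C * (if rank a < k then 1 else 0) + (N - rank a)
  have hu : ∀ x y, rank x ≤ rank y ↔ u y ≤ u x := by
    intro x y
    have := hrank y
    simp only [u]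
    constructor
    · intro h
      split_ifs <;> omega
    · intro h
      by_contra! hlt
      split_ifs at h <;> omega
  have hsum : ∀ A : Finset (Fin m),
      ∑ a ∈ A, u a = C * #{a ∈ A | rank a < k} + ∑ a ∈ A, (N - rank a) := by
    intro A
    simp only [u, sum_add_distrib, ← mul_sum, sum_boole, Nat.cast_id]
  have htie : ∀ A : Finset (Fin m), ∑ a ∈ A, (N - rank a) < C := by
    intro A
    calc ∑ a ∈ A, (N - rank a) ≤ #A * N := sum_le_card_nsmul A _ N fun a _ => Nat.sub_le _ _
      _ ≤ m * N := Nat.mul_le_mul_right N (card_le_univ A |>.trans_eq (Fintype.card_fin m))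
      _ < C := Nat.lt_succ_self _
  have h := hT.sum_compl_le hu
  rw [hsum, hsum] at h
  have hlex : ∀ a b s t : ℕ, t < C → C * a + s ≤ C * b + t → a ≤ b := by
    intro a b s t ht hle
    by_contra! hlt
    have := Nat.mul_le_mul_left C hlt
    rw [Nat.mul_succ] at this
    omega
  exact hlex _ _ _ _ (htie T) h

end Additive

/-- For the three preferences on single items of Example 5.1, every subset that is
necessarily agreeable with respect to all three contains at least `5 > ⌈6/2⌉ + 1 = 4` items. -/
theorem stmt_18 (T : Finset (Fin 6))
    (h1 : NecAgreeable (fun x y => rank1 x ≤ rank1 y) T)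
    (h2 : NecAgreeable (fun x y => rank2 x ≤ rank2 y) T)
    (h3 : NecAgreeable (fun x y => rank3 x ≤ rank3 y) T) :
    5 ≤ T.card := by
  have best₁ := h1.card_filter_compl_le (N := 6) (by decide) 1
  have topThree₁ := h1.card_filter_compl_le (N := 6) (by decide) 3
  have best₂ := h2.card_filter_compl_le (N := 6) (by decide) 1
  have topThree₂ := h2.card_filter_compl_le (N := 6) (by decide) 3
  have best₃ := h3.card_filter_compl_le (N := 6) (by decide) 1
  have topThree₃ := h3.card_filter_compl_le (N := 6) (by decide) 3
  clear h1 h2 h3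
  revert T
  decide
end
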